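/- The relation S < T on stationary subsets of a regular uncountable cardinal κ, defined by 'for all but a nonstationary set of α ∈ T, S ∩ α is stationary in α', is transitive. -/

import Mathlib

/-- `C` is closed and unbounded in the ordinal `o`. -/
def IsClubIn (C : Set Ordinal) (o : Ordinal) : Prop :=
  (∀ α, α < o → 0 < α → (∀ β < α, ∃ γ ∈ C, β < γ ∧ γ < α) → α ∈ C) ∧
  (∀ β, β < o → ∃ γ ∈ C, β < γ ∧ γ < o)

/-- `S` is stationary in the ordinal `o`: it meets every club in `o`. -/
def IsStatIn (S : Set Ordinal) (o : Ordinal) : Prop :=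
  ∀ C, IsClubIn C o → (S ∩ C).Nonempty

/-- The trace of `S` below `o`: points `α < o` where `S ∩ α` is stationary in `α`. -/
def statTrace (S : Set Ordinal) (o : Ordinal) : Set Ordinal :=
  {α | α < o ∧ IsStatIn (S ∩ Set.Iio α) α}

/-- `S` reflects fully in `T` (the relation `S < T`):
`{α ∈ T : S ∩ α not stationary in α}` is nonstationary in `o`. -/
def sLT (o : Ordinal) (S T : Set Ordinal) : Prop :=
  ¬ IsStatIn (T \ statTrace S o) o

/-- The regular cardinals below `o`. -/
def RegBelow (o : Ordinal) : Set Ordinal :=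
  {α | α < o ∧ ∃ c : Cardinal, c.IsRegular ∧ c.ord = α}

/-- The singular ordinals below `o`. -/
def SingBelow (o : Ordinal) : Set Ordinal :=
  {α | α < o ∧ ¬ ∃ c : Cardinal, c.IsRegular ∧ c.ord = α}

/-- `F` is a proper filter on subsets of `Iio o` extending the club filter. -/
def IsSetFilterOn (F : Set (Set Ordinal)) (o : Ordinal) : Prop :=
  (∀ X ∈ F, X ⊆ Set.Iio o) ∧ (Set.Iio o ∈ F) ∧ (∅ ∉ F) ∧
  (∀ X ∈ F, ∀ Y ∈ F, X ∩ Y ∈ F) ∧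
  (∀ X ∈ F, ∀ Y, Y ⊆ Set.Iio o → X ⊆ Y → Y ∈ F) ∧
  (∀ C, IsClubIn C o → Set.Iio o ∩ C ∈ F)

/-- `S` is `F`-positive: the complement of `S` (inside `Iio o`) is not in `F`. -/
def FPosIn (F : Set (Set Ordinal)) (S : Set Ordinal) (o : Ordinal) : Prop :=
  (Set.Iio o \ S) ∉ F

open Order Set

/-
Let `C₁`, `C₂` be clubs witnessing `S < T` and `T < U`, and let `α ∈ U ∩ C₂` be a closure
point of the map sending `δ` to the supremum of an `ω`-sequence above `δ` alternating between
the complement of `S` and `C₁`. Then `T ∩ α` is stationary in `α` and `α` is a limit of `C₁`.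
If `cf α > ω`, then for any club `D` of `α`, `T ∩ α` meets the common limit points of `C₁` and
`D`; such a `β` lies in `T ∩ C₁`, so `S ∩ β` is stationary in `β` and hence meets `D`.
If `cf α = ω`, then `T` contains a tail `(δ, α)`, and if `S ∩ α` were not stationary, the
complement of `S` would be unbounded in `α`. The alternating sequence from `δ` then has its
supremum `λ < α` in `T ∩ C₁`, while the complement of `S` is unbounded in `λ`, which has
cofinality `ω`; so `S ∩ λ` is not stationary in `λ`, a contradiction.
-/

def UnboundedIn (Z : Set Ordinal) (α : Ordinal) : Prop :=
  ∀ β < α, ∃ γ ∈ Z, β < γ ∧ γ < α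

/-- For a limit ordinal `o` this says `ℵ₀ < cof o`. -/
def NatSupsBelow (o : Ordinal) : Prop :=
  ∀ f : ℕ → Ordinal, Monotone f → (∀ n, f n < o) → ⨆ n, f n < o

theorem UnboundedIn.mono {Z W : Set Ordinal} {α : Ordinal} (hZ : UnboundedIn Z α)
    (hZW : Z ⊆ W) : UnboundedIn W α := fun β hβ =>
  let ⟨γ, hγ, hβγ, hγα⟩ := hZ β hβ
  ⟨γ, hZW hγ, hβγ, hγα⟩

theorem natSupsBelow_ord {κ : Cardinal} (hreg : κ.IsRegular) (hunc : Cardinal.aleph0 < κ) :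
    NatSupsBelow κ.ord :=
  fun _ _ hf => Ordinal.lift_iSup_lt_of_lt_cof (by simpa [hreg.cof_ord] using hunc) hf

/-- The least element of `Z` above `x`, or `succ x` if there is none. -/
noncomputable def nextIn (Z : Set Ordinal) (x : Ordinal) : Ordinal :=
  max (succ x) (sInf {y ∈ Z | x < y})

theorem lt_nextIn (Z : Set Ordinal) (x : Ordinal) : x < nextIn Z x :=
  (lt_succ x).trans_le (le_max_left _ _)

theorem UnboundedIn.nextIn_mem {Z : Set Ordinal} {x β : Ordinal} (hZ : UnboundedIn Z β)
    (hx : x < β) : nextIn Z x ∈ Z ∧ nextIn Z x < β := by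
  obtain ⟨y, hyZ, hxy, hyβ⟩ := hZ x hx
  have hmem := csInf_mem (s := {y ∈ Z | x < y}) ⟨y, hyZ, hxy⟩
  rw [nextIn, max_eq_right (succ_le_of_lt hmem.2)]
  exact ⟨hmem.1, (csInf_le' (s := {y ∈ Z | x < y}) ⟨hyZ, hxy⟩).trans_lt hyβ⟩

theorem nextIn_lt {Z : Set Ordinal} {o x : Ordinal} (hZ : Z ⊆ Iio o) (ho : IsSuccLimit o)
    (hx : x < o) : nextIn Z x < o := by
  rcases {y ∈ Z | x < y}.eq_empty_or_nonempty with h | h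
  · simpa [nextIn, h] using ho.succ_lt hx
  · exact max_lt (ho.succ_lt hx) (hZ (csInf_mem h).1)

theorem nextIn_mono (Z : Set Ordinal) : Monotone (nextIn Z) := by
  intro x x' hx
  refine max_le (le_max_of_le_left (succ_le_succ hx)) ?_
  by_cases h' : ∃ y ∈ Z, x' < y
  · obtain ⟨y, hyZ, hy⟩ := h'
    exact le_max_of_le_right
      (le_csInf ⟨y, hyZ, hy⟩ fun b hb => csInf_le' ⟨hb.1, hx.trans_lt hb.2⟩)
  · rcases {y ∈ Z | x < y}.eq_empty_or_nonempty with h | h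
    · simp [h]
    · have hle : sInf {y ∈ Z | x < y} ≤ x' :=
        not_lt.1 fun hlt => h' ⟨_, (csInf_mem h).1, hlt⟩
      exact le_max_of_le_left (hle.trans (le_succ x'))

noncomputable def iterSup (h : Ordinal → Ordinal) (δ : Ordinal) : Ordinal :=
  ⨆ n, h^[n] δ

section iterSup

variable {h : Ordinal → Ordinal} {δ : Ordinal}

theorem strictMono_iterate_apply (hh : ∀ x, x < h x) : StrictMono fun n => h^[n] δ :=
  strictMono_nat_of_lt_succ fun n => by
    rw [Function.iterate_succ_apply']
    exact hh _

theorem iterate_lt_iterSup (hh : ∀ x, x < h x) (n : ℕ) : h^[n] δ < iterSup h δ :=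
  (strictMono_iterate_apply hh n.lt_succ_self).trans_le
    (Ordinal.le_iSup (fun n => h^[n] δ) (n + 1))

theorem lt_iterSup (hh : ∀ x, x < h x) : δ < iterSup h δ :=
  iterate_lt_iterSup hh 0

theorem apply_lt_iterSup (hh : ∀ x, x < h x) : h δ < iterSup h δ :=
  iterate_lt_iterSup hh 1

theorem exists_lt_iterate_of_lt_iterSup {γ : Ordinal} (hγ : γ < iterSup h δ) :
    ∃ n, γ < h^[n] δ :=
  Ordinal.lt_iSup_iff.1 hγ

theorem iterSup_lt {o : Ordinal} (ho : NatSupsBelow o) (hh : ∀ x, x < h x)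
    (hlt : ∀ x < o, h x < o) (hδ : δ < o) : iterSup h δ < o := by
  refine ho _ (strictMono_iterate_apply hh).monotone fun n => ?_
  induction n with
  | zero => exact hδ
  | succ n ih =>
    rw [Function.iterate_succ_apply']
    exact hlt _ ih

theorem iterSup_mono (hh : Monotone h) : Monotone (iterSup h) := fun _ _ hab =>
  Ordinal.iSup_le fun n => (hh.iterate n hab).trans (Ordinal.le_iSup (fun n => h^[n] _) n)

theorem unboundedIn_iterSup {C : Set Ordinal} (hh : ∀ x, x < h x)
    (hC : ∀ x < iterSup h δ, ∃ c ∈ C, x < c ∧ c ≤ h x) : UnboundedIn C (iterSup h δ) := by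
  intro γ hγ
  obtain ⟨n, hn⟩ := exists_lt_iterate_of_lt_iterSup hγ
  obtain ⟨c, hcC, hnc, hch⟩ := hC _ (iterate_lt_iterSup hh n)
  refine ⟨c, hcC, hn.trans hnc, hch.trans_lt ?_⟩
  rw [← Function.iterate_succ_apply' h n δ]
  exact iterate_lt_iterSup hh (n + 1)

end iterSup

section Club

variable {o : Ordinal}

theorem isClubIn_accPoints (ho : NatSupsBelow o) {D : Set Ordinal} (hD : UnboundedIn D o) :
    IsClubIn {x | 0 < x ∧ UnboundedIn D x} o := by
  refine ⟨fun x _ hx0 hacc => ⟨hx0, fun β hβ => ?_⟩, fun β hβ => ?_⟩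
  · obtain ⟨γ, ⟨-, hγ⟩, hβγ, hγx⟩ := hacc β hβ
    obtain ⟨c, hc, hβc, hcγ⟩ := hγ β hβγ
    exact ⟨c, hc, hβc, hcγ.trans hγx⟩
  · have hso := iterSup_lt ho (lt_nextIn D) (fun x hx => (hD.nextIn_mem hx).2) hβ
    have hβs : β < iterSup (nextIn D) β := lt_iterSup (lt_nextIn D)
    refine ⟨_, ⟨hβs.pos, unboundedIn_iterSup (lt_nextIn D) fun x hx => ?_⟩,
      hβs, hso⟩
    exact ⟨_, (hD.nextIn_mem (hx.trans hso)).1, lt_nextIn D x, le_rfl⟩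

theorem IsClubIn.inter (ho : NatSupsBelow o) {C D : Set Ordinal} (hC : IsClubIn C o)
    (hD : IsClubIn D o) : IsClubIn (C ∩ D) o := by
  refine ⟨fun x hx hx0 hCD => ⟨hC.1 x hx hx0 (UnboundedIn.mono hCD inter_subset_left),
    hD.1 x hx hx0 (UnboundedIn.mono hCD inter_subset_right)⟩, fun β hβ => ?_⟩
  have hh : ∀ x, x < (nextIn D ∘ nextIn C) x := fun x => (lt_nextIn C x).trans (lt_nextIn D _)
  have hstep : ∀ x < o, nextIn C x ∈ C ∧ nextIn D (nextIn C x) ∈ D ∧ nextIn D (nextIn C x) < o :=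
    fun x hx => ⟨(UnboundedIn.nextIn_mem hC.2 hx).1,
      UnboundedIn.nextIn_mem hD.2 (UnboundedIn.nextIn_mem hC.2 hx).2⟩
  have hso := iterSup_lt ho hh (fun x hx => (hstep x hx).2.2) hβ
  have hβs : β < iterSup (nextIn D ∘ nextIn C) β := lt_iterSup hh
  have hs0 := hβs.pos
  refine ⟨_, ⟨hC.1 _ hso hs0 (unboundedIn_iterSup hh fun x hx => ?_),
    hD.1 _ hso hs0 (unboundedIn_iterSup hh fun x hx => ?_)⟩, hβs, hso⟩
  · exact ⟨_, (hstep x (hx.trans hso)).1, lt_nextIn C x, (lt_nextIn D _).le⟩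
  · exact ⟨_, (hstep x (hx.trans hso)).2.1, hh x, le_rfl⟩

theorem isClubIn_closurePoints (ho : NatSupsBelow o) {F : Ordinal → Ordinal}
    (hmono : Monotone F) (hF : ∀ x, x < F x) (hlt : ∀ x < o, F x < o) :
    IsClubIn {x | x < o ∧ ∀ δ < x, F δ < x} o := by
  refine ⟨fun x hx _ hacc => ⟨hx, fun δ hδ => ?_⟩, fun β hβ => ?_⟩
  · obtain ⟨γ, ⟨-, hγ⟩, hδγ, hγx⟩ := hacc δ hδ
    exact (hγ δ hδγ).trans hγx
  · have hso := iterSup_lt ho hF hlt hβ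
    refine ⟨iterSup F β, ⟨hso, fun δ hδ => ?_⟩, lt_iterSup hF, hso⟩
    obtain ⟨n, hn⟩ := exists_lt_iterate_of_lt_iterSup hδ
    calc F δ ≤ F^[n + 1] β := by rw [Function.iterate_succ_apply']; exact hmono hn.le
      _ < iterSup F β := iterate_lt_iterSup hF _

end Club

theorem isClubIn_range {f : ℕ → Ordinal} {α : Ordinal} (hf : Monotone f)
    (hlt : ∀ n, f n < α) (hcof : ∀ β < α, ∃ n, β < f n) : IsClubIn (range f) α := by
  refine ⟨fun x hx hx0 hacc => ?_, fun β hβ => ?_⟩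
  · -- `range f` has no limit points below `α`: infinitely many `f m` would lie below `x`.
    have hfar : ∀ N, ∃ m, N ≤ m ∧ f m < x := by
      intro N
      induction N with
      | zero =>
        obtain ⟨_, ⟨m, rfl⟩, -, hm⟩ := hacc 0 hx0
        exact ⟨m, m.zero_le, hm⟩
      | succ N ih =>
        obtain ⟨m, hNm, hm⟩ := ih
        obtain ⟨_, ⟨m', rfl⟩, hmm', hm'⟩ := hacc _ hm
        exact ⟨m', hNm.trans_lt (hf.reflect_lt hmm'), hm'⟩
    obtain ⟨n, hn⟩ := hcof x hx
    obtain ⟨m, hnm, hm⟩ := hfar n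
    exact absurd hm (hn.trans_le (hf hnm)).not_gt
  · obtain ⟨n, hn⟩ := hcof β hβ
    exact ⟨f n, ⟨n, rfl⟩, hn, hlt n⟩

theorem IsStatIn.not_unboundedIn_compl {X : Set Ordinal} {α : Ordinal} (hX : IsStatIn X α)
    {f : ℕ → Ordinal} (hf : Monotone f) (hlt : ∀ n, f n < α) (hsup : α ≤ ⨆ n, f n) :
    ¬ UnboundedIn Xᶜ α := by
  intro hXc
  have hcof : ∀ β < α, ∃ n, β < f n := fun β hβ => Ordinal.lt_iSup_iff.1 (hβ.trans_le hsup)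
  obtain ⟨_, hx, n, rfl⟩ := hX _ (isClubIn_range (f := nextIn Xᶜ ∘ f) ((nextIn_mono _).comp hf)
    (fun n => (hXc.nextIn_mem (hlt n)).2)
    fun β hβ => (hcof β hβ).imp fun n hn => hn.trans (lt_nextIn _ _))
  exact (hXc.nextIn_mem (hlt n)).1 hx

theorem sLT.exists_club {o : Ordinal} {S T : Set Ordinal} (h : sLT o S T) :
    ∃ C, IsClubIn C o ∧ ∀ β ∈ T, β ∈ C → β ∈ statTrace S o := by
  simp only [sLT, IsStatIn, not_forall] at h
  obtain ⟨C, hC, hTC⟩ := h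
  exact ⟨C, hC, fun β hβT hβC => by_contra fun hβ => hTC ⟨β, ⟨hβT, hβ⟩, hβC⟩⟩

section Reflection

variable {o α : Ordinal} {S T C : Set Ordinal}

theorem isStatIn_inter_Iio_of_natSupsBelow (hC : IsClubIn C o)
    (hCT : ∀ β ∈ T, β ∈ C → β ∈ statTrace S o) (hαo : α < o) (hα : NatSupsBelow α)
    (hCα : UnboundedIn C α) (hTα : IsStatIn (T ∩ Iio α) α) : IsStatIn (S ∩ Iio α) α := by
  intro D hD
  obtain ⟨β, ⟨hβT, hβα⟩, ⟨hβ0, hCβ⟩, -, hDβ⟩ :=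
    hTα _ ((isClubIn_accPoints hα hCα).inter hα (isClubIn_accPoints hα hD.2))
  have hβS : IsStatIn (S ∩ Iio β) β := (hCT β hβT (hC.1 β (hβα.trans hαo) hβ0 hCβ)).2
  obtain ⟨z, ⟨hzS, hzβ⟩, hzD⟩ := hβS D ⟨fun x hx => hD.1 x (hx.trans hβα), hDβ⟩
  exact ⟨z, ⟨hzS, mem_Iio.2 (lt_trans hzβ hβα)⟩, hzD⟩

theorem isStatIn_inter_Iio_of_not_natSupsBelow (hC : IsClubIn C o)
    (hCT : ∀ β ∈ T, β ∈ C → β ∈ statTrace S o) (hαo : α < o) (hα : ¬ NatSupsBelow α)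
    (hαF : ∀ δ < α, iterSup (nextIn C ∘ nextIn (Iio o \ S)) δ < α)
    (hTα : IsStatIn (T ∩ Iio α) α) : IsStatIn (S ∩ Iio α) α := by
  intro D hD
  by_contra hSD
  have hZ : UnboundedIn (Iio o \ S) α := fun β hβ => by
    obtain ⟨γ, hγD, hβγ, hγα⟩ := hD.2 β hβ
    exact ⟨γ, ⟨hγα.trans hαo, fun hγS => hSD ⟨γ, ⟨hγS, hγα⟩, hγD⟩⟩, hβγ, hγα⟩
  simp only [NatSupsBelow, not_forall, not_lt, exists_prop] at hα
  obtain ⟨f, hf, hflt, hfsup⟩ := hα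
  obtain ⟨δ, hδα, hδT⟩ : ∃ δ < α, ∀ x, δ < x → x < α → x ∈ T := by
    by_contra! H
    refine hTα.not_unboundedIn_compl hf hflt hfsup fun β hβ => ?_
    obtain ⟨x, hβx, hxα, hxT⟩ := H β hβ
    exact ⟨x, fun hx => hxT hx.1, hβx, hxα⟩
  set h := nextIn C ∘ nextIn (Iio o \ S)
  have hh : ∀ x, x < h x := fun x => (lt_nextIn _ x).trans (lt_nextIn C _)
  set s := iterSup h δ
  have hsα : s < α := hαF δ hδα
  have hZs : UnboundedIn (Iio o \ S) s := unboundedIn_iterSup hh fun x hx =>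
    ⟨_, (hZ.nextIn_mem (hx.trans hsα)).1, lt_nextIn _ x, (lt_nextIn C _).le⟩
  have hCs : UnboundedIn C s := unboundedIn_iterSup hh fun x hx =>
    ⟨_, (UnboundedIn.nextIn_mem hC.2 ((hZ.nextIn_mem (hx.trans hsα)).2.trans hαo)).1,
      hh x, le_rfl⟩
  have hs0 : 0 < s := (lt_iterSup hh).pos
  have hsS : IsStatIn (S ∩ Iio s) s :=
    (hCT s (hδT s (lt_iterSup hh) hsα) (hC.1 s (hsα.trans hαo) hs0 hCs)).2
  exact hsS.not_unboundedIn_compl (strictMono_iterate_apply hh).monotone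
    (iterate_lt_iterSup hh) le_rfl (hZs.mono fun x hx hxS => hx.2 hxS.1)

end Reflection

theorem sLT_trans_general (κ : Cardinal) (hreg : κ.IsRegular) (hunc : Cardinal.aleph0 < κ)
    (S T U : Set Ordinal)
    (hST : sLT κ.ord S T) (hTU : sLT κ.ord T U) :
    sLT κ.ord S U := by
  obtain ⟨C₁, hC₁, hC₁T⟩ := hST.exists_club
  obtain ⟨C₂, hC₂, hC₂U⟩ := hTU.exists_club
  have ho : NatSupsBelow κ.ord := natSupsBelow_ord hreg hunc
  set h := nextIn C₁ ∘ nextIn (Iio κ.ord \ S)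
  have hh : ∀ x, x < h x := fun x => (lt_nextIn _ x).trans (lt_nextIn C₁ _)
  have hhC : ∀ x < κ.ord, h x ∈ C₁ ∧ h x < κ.ord := fun x hx => UnboundedIn.nextIn_mem hC₁.2
    (nextIn_lt sdiff_subset (Cardinal.isSuccLimit_ord hunc.le) hx)
  have hF := isClubIn_closurePoints ho (iterSup_mono ((nextIn_mono _).comp (nextIn_mono _)))
    (fun _ => lt_iterSup hh) fun x hx => iterSup_lt ho hh (fun y hy => (hhC y hy).2) hx
  intro hU
  obtain ⟨α, ⟨hαU, hαS⟩, hαC₂, hαo, hαF⟩ := hU _ (hC₂.inter ho hF)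
  have hTα : IsStatIn (T ∩ Iio α) α := (hC₂U α hαU hαC₂).2
  refine hαS ⟨hαo, ?_⟩
  by_cases hα : NatSupsBelow α
  · refine isStatIn_inter_Iio_of_natSupsBelow hC₁ hC₁T hαo hα (fun x hx => ?_) hTα
    exact ⟨h x, (hhC x (hx.trans hαo)).1, hh x, (apply_lt_iterSup hh).trans (hαF x hx)⟩
  · exact isStatIn_inter_Iio_of_not_natSupsBelow hC₁ hC₁T hαo hα hαF hTα

/-- The full-reflection relation `S < T` on stationary subsets of a regular
uncountable cardinal is transitive. -/
theorem sLT_trans (κ : Cardinal) (hreg : κ.IsRegular) (hunc : Cardinal.aleph0 < κ)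
    (S T U : Set Ordinal)
    (hS : S ⊆ Set.Iio κ.ord) (hSstat : IsStatIn S κ.ord)
    (hT : T ⊆ Set.Iio κ.ord) (hTstat : IsStatIn T κ.ord)
    (hU : U ⊆ Set.Iio κ.ord) (hUstat : IsStatIn U κ.ord)
    (hST : sLT κ.ord S T) (hTU : sLT κ.ord T U) :
    sLT κ.ord S U :=
  sLT_trans_general κ hreg hunc S T U hST hTU
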